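/- Let h, p, q : ℝ → [0,∞] be functions with nonempty epigraphs such that p ≤ h and q ≤ h pointwise (equivalently, epi(h) ⊆ epi(p) and epi(h) ⊆ epi(q)), and let k ≥ 1. If p ∈ V_k(h) and q ∈ V_k(h), then for every λ ∈ [0,1] the pointwise convex combination λp + (1−λ)q belongs to V_k(h). -/
import Mathlib


open MeasureTheory Filter Metric Set
open scoped ENNReal Classical

noncomputable section

/-- Epigraph of an extended-real-valued function on `ℝ`, as a subset of `ℝ²`
(which carries the box metric `dist p q = max |p₁-q₁| |p₂-q₂|`). -/
def epiE (f : ℝ → EReal) : Set (ℝ × ℝ) := {p | f p.1 ≤ (p.2 : EReal)}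

/-- `awGap A B r` is `sup_{x ∈ B̄_r} |dist(x,A) - dist(x,B)|`. -/
def awGap (A B : Set (ℝ × ℝ)) (r : ℝ) : ℝ :=
  sSup ((fun x => |infDist x A - infDist x B|) '' closedBall (0 : ℝ × ℝ) r)

/-- Attouch–Wets convergence of a sequence of functions, via epigraphs. -/
def AWTendsto (F : ℕ → ℝ → EReal) (f : ℝ → EReal) : Prop :=
  ∀ r : ℝ, 0 < r → Tendsto (fun n => awGap (epiE (F n)) (epiE f) r) atTop (nhds 0)

/-- The basic Attouch–Wets neighbourhood `V_k(f)`. -/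
def Vk (k : ℕ) (f : ℝ → EReal) : Set (ℝ → EReal) :=
  {g | awGap (epiE g) (epiE f) (k : ℝ) < 1 / (k : ℝ)}

/-- Convexity for extended-real-valued functions on `ℝ`. -/
def ERConvex (f : ℝ → EReal) : Prop :=
  ∀ x y a b : ℝ, 0 ≤ a → 0 ≤ b → a + b = 1 →
    f (a * x + b * y) ≤ (a : EReal) * f x + (b : EReal) * f y

/-- Effective domain of an extended-real-valued function. -/
def effDom (f : ℝ → EReal) : Set ℝ := {θ | f θ < ⊤}

/-- The moment generating function of a measure on `ℝ`, with values in `(0,∞]`. -/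
def mgfE (ν : Measure ℝ) : ℝ → EReal :=
  fun θ => ((∫⁻ x, ENNReal.ofReal (Real.exp (θ * x)) ∂ν : ℝ≥0∞) : EReal)

/-- `log` of a probability, with the convention `log 0 = -∞`. -/
def elog (p : ℝ≥0∞) : EReal := if p = 0 then ⊥ else ((Real.log p.toReal : ℝ) : EReal)

/-- The empirical moment generating function estimator
`M_n(θ) = (1/n) ∑_{i<n} exp (θ X_i)`. -/
def Mn {Ω : Type*} (X : ℕ → Ω → ℝ) (n : ℕ) (ω : Ω) : ℝ → EReal :=
  fun θ => (((n : ℝ)⁻¹ * ∑ i ∈ Finset.range n, Real.exp (θ * X i ω) : ℝ) : EReal)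

/-- The rate value `I_M(f) = -inf_{k ≥ 1} limsup_n (1/n) log ℙ(M_n ∈ V_k(f))`. -/
def IM {Ω : Type*} [MeasurableSpace Ω] (P : Measure Ω) (X : ℕ → Ω → ℝ)
    (f : ℝ → EReal) : EReal :=
  - ⨅ k ∈ Set.Ici 1, limsup
      (fun n : ℕ => (((n : ℝ)⁻¹ : ℝ) : EReal) * elog (P {ω | Mn X n ω ∈ Vk k f})) atTop

/-- `f` is lower semicontinuous, convex and `[0,∞]`-valued. -/
def IsAdm0 (f : ℝ → EReal) : Prop :=
  LowerSemicontinuous f ∧ ERConvex f ∧ ∀ θ, 0 ≤ f θ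

lemma epiE_mono {f g : ℝ → EReal} (hfg : ∀ θ, f θ ≤ g θ) : epiE g ⊆ epiE f :=
  fun x hx => le_trans (hfg x.1) hx

lemma gap_bdd {A B : Set (ℝ × ℝ)} (hBA : B ⊆ A) (hB : B.Nonempty) (r : ℝ) :
    ∀ x ∈ closedBall (0 : ℝ × ℝ) r,
      |infDist x A - infDist x B| ≤ r + dist (0 : ℝ × ℝ) hB.some := by
  intro x hx
  have hA : A.Nonempty := ⟨hB.some, hBA hB.some_mem⟩
  have h1 : infDist x A ≤ infDist x B := infDist_le_infDist_of_subset hBA hB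
  have h2 : infDist x B ≤ dist x hB.some := infDist_le_dist_of_mem hB.some_mem
  have h3 : dist x hB.some ≤ dist x 0 + dist (0 : ℝ × ℝ) hB.some := dist_triangle _ _ _
  have hx' : dist x (0 : ℝ × ℝ) ≤ r := mem_closedBall.1 hx
  have h0A : 0 ≤ infDist x A := infDist_nonneg
  rw [abs_sub_comm, abs_of_nonneg (by linarith [infDist_nonneg (s := B) (x := x)])]
  linarith

lemma gap_bddAbove {A B : Set (ℝ × ℝ)} (hBA : B ⊆ A) (hB : B.Nonempty) (r : ℝ) :
    BddAbove ((fun x => |infDist x A - infDist x B|) '' closedBall (0 : ℝ × ℝ) r) := by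
  refine ⟨r + dist (0 : ℝ × ℝ) hB.some, ?_⟩
  rintro v ⟨x, hx, rfl⟩
  exact gap_bdd hBA hB r x hx

lemma awGap_nonneg {A B : Set (ℝ × ℝ)} (hBA : B ⊆ A) (hB : B.Nonempty) {r : ℝ}
    (hr : 0 ≤ r) : 0 ≤ awGap A B r := by
  have h0 : (0 : ℝ × ℝ) ∈ closedBall (0 : ℝ × ℝ) r := mem_closedBall_self hr
  calc (0 : ℝ) ≤ |infDist (0 : ℝ × ℝ) A - infDist (0 : ℝ × ℝ) B| := abs_nonneg _
    _ ≤ awGap A B r := le_csSup (gap_bddAbove hBA hB r) ⟨0, h0, rfl⟩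

/-- Convex combinations of functions lying in `V_k(h)` whose epigraphs contain
that of `h` remain in `V_k(h)`. -/
theorem Vk_convex
    (h p q : ℝ → EReal)
    (hh : ∀ θ, 0 ≤ h θ) (hp : ∀ θ, 0 ≤ p θ) (hq : ∀ θ, 0 ≤ q θ)
    (hne : (epiE h).Nonempty ∧ (epiE p).Nonempty ∧ (epiE q).Nonempty)
    (hple : ∀ θ, p θ ≤ h θ) (hqle : ∀ θ, q θ ≤ h θ)
    (k : ℕ) (hk : 1 ≤ k)
    (hpV : p ∈ Vk k h) (hqV : q ∈ Vk k h)
    (lam : ℝ) (h0 : 0 ≤ lam) (h1 : lam ≤ 1) :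
    (fun θ => (lam : EReal) * p θ + ((1 - lam : ℝ) : EReal) * q θ) ∈ Vk k h := by
  obtain ⟨hHne, hPne, hQne⟩ := hne
  set g : ℝ → EReal := fun θ => (lam : EReal) * p θ + ((1 - lam : ℝ) : EReal) * q θ with hgdef
  have hlam0 : (0 : EReal) ≤ (lam : EReal) := by exact_mod_cast h0
  have hlam1 : (0 : EReal) ≤ ((1 - lam : ℝ) : EReal) := by
    have : (0:ℝ) ≤ 1 - lam := by linarith
    exact_mod_cast this
  have hsum : (lam : EReal) + ((1 - lam : ℝ) : EReal) = 1 := by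
    rw [← EReal.coe_add]; norm_num
  have hcomb : ∀ (a b : EReal), (lam : EReal) * a + ((1 - lam : ℝ) : EReal) * a = a := by
    intro a b
    rw [← EReal.right_distrib_of_nonneg hlam0 hlam1, hsum, one_mul]
  -- g ≤ h pointwise
  have hgle : ∀ θ, g θ ≤ h θ := by
    intro θ
    calc g θ ≤ (lam : EReal) * h θ + ((1 - lam : ℝ) : EReal) * h θ :=
          add_le_add (mul_le_mul_of_nonneg_left (hple θ) hlam0)
            (mul_le_mul_of_nonneg_left (hqle θ) hlam1)
      _ = h θ := hcomb _ 0
  -- min p q ≤ g pointwise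
  have hming : ∀ θ, min (p θ) (q θ) ≤ g θ := by
    intro θ
    calc min (p θ) (q θ)
        = (lam : EReal) * min (p θ) (q θ) + ((1 - lam : ℝ) : EReal) * min (p θ) (q θ) :=
          (hcomb _ 0).symm
      _ ≤ g θ := add_le_add (mul_le_mul_of_nonneg_left (min_le_left _ _) hlam0)
            (mul_le_mul_of_nonneg_left (min_le_right _ _) hlam1)
  have hHG : epiE h ⊆ epiE g := epiE_mono hgle
  have hHP : epiE h ⊆ epiE p := epiE_mono hple
  have hHQ : epiE h ⊆ epiE q := epiE_mono hqle
  have hGne : (epiE g).Nonempty := ⟨hHne.some, hHG hHne.some_mem⟩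
  have hGPQ : epiE g ⊆ epiE p ∪ epiE q := by
    intro x hx
    have : min (p x.1) (q x.1) ≤ (x.2 : EReal) := le_trans (hming x.1) hx
    rcases min_le_iff.1 this with h' | h'
    · exact Or.inl h'
    · exact Or.inr h'
  have hkpos : (0:ℝ) < (k : ℝ) := by exact_mod_cast hk
  -- pointwise bound on closed ball, then sSup
  have key : awGap (epiE g) (epiE h) (k : ℝ)
      ≤ max (awGap (epiE p) (epiE h) (k : ℝ)) (awGap (epiE q) (epiE h) (k : ℝ)) := by
    apply Real.sSup_le
    · rintro v ⟨x, hx, rfl⟩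
      have dGH : infDist x (epiE g) ≤ infDist x (epiE h) :=
        infDist_le_infDist_of_subset hHG hHne
      have dPH : infDist x (epiE p) ≤ infDist x (epiE h) :=
        infDist_le_infDist_of_subset hHP hHne
      have dQH : infDist x (epiE q) ≤ infDist x (epiE h) :=
        infDist_le_infDist_of_subset hHQ hHne
      -- min (d p) (d q) ≤ d g
      have hmin : min (infDist x (epiE p)) (infDist x (epiE q)) ≤ infDist x (epiE g) := by
        by_contra hcon
        push_neg at hcon
        obtain ⟨y, hy, hdy⟩ := (infDist_lt_iff hGne).1 hcon
        rcases hGPQ hy with h' | h'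
        · have := infDist_le_dist_of_mem (x := x) h'
          have := min_le_left (infDist x (epiE p)) (infDist x (epiE q))
          linarith
        · have := infDist_le_dist_of_mem (x := x) h'
          have := min_le_right (infDist x (epiE p)) (infDist x (epiE q))
          linarith
      have e1 : |infDist x (epiE g) - infDist x (epiE h)|
          = infDist x (epiE h) - infDist x (epiE g) := by
        rw [abs_sub_comm, abs_of_nonneg (by linarith)]
      show |infDist x (epiE g) - infDist x (epiE h)| ≤ _
      rw [e1]
      rcases le_total (infDist x (epiE p)) (infDist x (epiE q)) with hc | hc
      · have : infDist x (epiE h) - infDist x (epiE g)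
            ≤ |infDist x (epiE p) - infDist x (epiE h)| := by
          rw [abs_sub_comm, abs_of_nonneg (by linarith)]
          have := min_eq_left hc ▸ hmin
          linarith [min_eq_left hc ▸ hmin]
        exact le_max_of_le_left
          (le_trans this (le_csSup (gap_bddAbove hHP hHne _) ⟨x, hx, rfl⟩))
      · have : infDist x (epiE h) - infDist x (epiE g)
            ≤ |infDist x (epiE q) - infDist x (epiE h)| := by
          rw [abs_sub_comm, abs_of_nonneg (by linarith)]
          linarith [min_eq_right hc ▸ hmin]
        exact le_max_of_le_right
          (le_trans this (le_csSup (gap_bddAbove hHQ hHne _) ⟨x, hx, rfl⟩))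
    · exact le_max_of_le_left (awGap_nonneg hHP hHne hkpos.le)
  have : max (awGap (epiE p) (epiE h) (k : ℝ)) (awGap (epiE q) (epiE h) (k : ℝ))
      < 1 / (k : ℝ) := max_lt hpV hqV
  exact lt_of_le_of_lt key this


end
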